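/- Orthogonality of Λ⊥ and Λ₀: with T, X, Y₀ as above and w(X) = P(T=1|X), for any square-integrable g(X) and any c(Y₀,X) with E[c(Y₀,X) | X, T=0] = 0, the element (1−T)·c(Y₀,X) + ((T−w(X))/w(X))·E[c(Y₀,X)|X] is orthogonal in L² to ((T−π)/(1−π))·g(X), where π = P(T=1|Y₀,X). -/

import Mathlib

open MeasureTheory ENNReal

namespace Stmt9Aux

variable {Ω : Type*} {F : MeasurableSpace Ω} {μ : Measure Ω}

lemma mulInt {c g : Ω → ℝ} (hc : MemLp c 2 μ) (hg : MemLp g 2 μ) :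
    Integrable (fun ω => c ω * g ω) μ := by
  refine ((hc.integrable_sq.add hg.integrable_sq).div_const 2).mono'
    (hc.aestronglyMeasurable.mul hg.aestronglyMeasurable)
    (Filter.Eventually.of_forall fun ω => ?_)
  have h1 := sq_nonneg (|c ω| - |g ω|)
  rw [Real.norm_eq_abs, abs_mul]
  have h2 : |c ω| ^ 2 = c ω ^ 2 := sq_abs _
  have h3 : |g ω| ^ 2 = g ω ^ 2 := sq_abs _
  simp only [Pi.add_apply]
  nlinarith [abs_nonneg (c ω), abs_nonneg (g ω)]

lemma lkey [IsFiniteMeasure μ] {m : MeasurableSpace Ω} (hm : m ≤ F)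
    {τ : Ω → ℝ} (hτm : Measurable[F] τ) (hτ0 : 0 ≤ᵐ[μ] τ) (hτi : Integrable τ μ)
    {G : Ω → ℝ≥0∞} (hG : Measurable[m] G) :
    ∫⁻ ω, ENNReal.ofReal (τ ω) * G ω ∂μ
      = ∫⁻ ω, ENNReal.ofReal ((μ[τ|m]) ω) * G ω ∂μ := by
  have hρm : Measurable[m] (μ[τ|m]) := stronglyMeasurable_condExp.measurable
  have hρi : Integrable (μ[τ|m]) μ := integrable_condExp
  have hρ0 : 0 ≤ᵐ[μ] (μ[τ|m]) := condExp_nonneg hτ0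
  have hGF : Measurable[F] G := hG.mono hm le_rfl
  have h1 := lintegral_withDensity_eq_lintegral_mul μ
    (f := fun ω => ENNReal.ofReal (τ ω)) hτm.ennreal_ofReal hGF
  have h2 := lintegral_withDensity_eq_lintegral_mul μ
    (f := fun ω => ENNReal.ofReal ((μ[τ|m]) ω))
    ((hρm.mono hm le_rfl).ennreal_ofReal) hGF
  have htrim : (μ.withDensity fun ω => ENNReal.ofReal (τ ω)).trim hm
      = (μ.withDensity fun ω => ENNReal.ofReal ((μ[τ|m]) ω)).trim hm := by
    refine Measure.ext fun s hs => ?_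
    rw [trim_measurableSet_eq hm hs, trim_measurableSet_eq hm hs,
      withDensity_apply _ (hm s hs), withDensity_apply _ (hm s hs),
      ← ofReal_integral_eq_lintegral_ofReal hτi.restrict (ae_restrict_of_ae hτ0),
      ← ofReal_integral_eq_lintegral_ofReal hρi.restrict (ae_restrict_of_ae hρ0),
      setIntegral_condExp hm hτi hs]
  calc ∫⁻ ω, ENNReal.ofReal (τ ω) * G ω ∂μ
      = ∫⁻ ω, G ω ∂(μ.withDensity fun ω => ENNReal.ofReal (τ ω)) := h1.symm
    _ = ∫⁻ ω, G ω ∂((μ.withDensity fun ω => ENNReal.ofReal (τ ω)).trim hm) :=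
        (lintegral_trim hm hG).symm
    _ = ∫⁻ ω, G ω ∂((μ.withDensity fun ω => ENNReal.ofReal ((μ[τ|m]) ω)).trim hm) := by
        rw [htrim]
    _ = ∫⁻ ω, G ω ∂(μ.withDensity fun ω => ENNReal.ofReal ((μ[τ|m]) ω)) :=
        lintegral_trim hm hG
    _ = _ := h2

lemma key [IsFiniteMeasure μ] {m : MeasurableSpace Ω} (hm : m ≤ F)
    {τ f : Ω → ℝ} (hτm : Measurable[F] τ) (hτ0 : ∀ ω, 0 ≤ τ ω) (hτi : Integrable τ μ)
    (hfm : Measurable[m] f)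
    (hρf : Integrable (fun ω => (μ[τ|m]) ω * f ω) μ) :
    Integrable (fun ω => τ ω * f ω) μ ∧
      ∫ ω, τ ω * f ω ∂μ = ∫ ω, (μ[τ|m]) ω * f ω ∂μ := by
  have hρ0 : 0 ≤ᵐ[μ] (μ[τ|m]) := condExp_nonneg (Filter.Eventually.of_forall hτ0)
  have hfF : Measurable[F] f := hfm.mono hm le_rfl
  -- three lintegral identities
  have habs : ∫⁻ ω, ENNReal.ofReal (τ ω * |f ω|) ∂μ
      = ∫⁻ ω, ENNReal.ofReal ((μ[τ|m]) ω * |f ω|) ∂μ := by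
    calc ∫⁻ ω, ENNReal.ofReal (τ ω * |f ω|) ∂μ
        = ∫⁻ ω, ENNReal.ofReal (τ ω) * ENNReal.ofReal (|f ω|) ∂μ := by
          simp_rw [ENNReal.ofReal_mul (hτ0 _)]
      _ = ∫⁻ ω, ENNReal.ofReal ((μ[τ|m]) ω) * ENNReal.ofReal (|f ω|) ∂μ :=
          lkey hm hτm (Filter.Eventually.of_forall hτ0) hτi
            (Measurable.ennreal_ofReal hfm.abs)
      _ = _ := by
          refine lintegral_congr_ae ?_
          filter_upwards [hρ0] with ω h0
          rw [ENNReal.ofReal_mul h0]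
  have hpos : ∫⁻ ω, ENNReal.ofReal (τ ω * f ω) ∂μ
      = ∫⁻ ω, ENNReal.ofReal ((μ[τ|m]) ω * f ω) ∂μ := by
    calc ∫⁻ ω, ENNReal.ofReal (τ ω * f ω) ∂μ
        = ∫⁻ ω, ENNReal.ofReal (τ ω) * ENNReal.ofReal (f ω) ∂μ := by
          simp_rw [ENNReal.ofReal_mul (hτ0 _)]
      _ = ∫⁻ ω, ENNReal.ofReal ((μ[τ|m]) ω) * ENNReal.ofReal (f ω) ∂μ :=
          lkey hm hτm (Filter.Eventually.of_forall hτ0) hτi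
            (Measurable.ennreal_ofReal hfm)
      _ = _ := by
          refine lintegral_congr_ae ?_
          filter_upwards [hρ0] with ω h0
          rw [ENNReal.ofReal_mul h0]
  have hneg : ∫⁻ ω, ENNReal.ofReal (-(τ ω * f ω)) ∂μ
      = ∫⁻ ω, ENNReal.ofReal (-((μ[τ|m]) ω * f ω)) ∂μ := by
    calc ∫⁻ ω, ENNReal.ofReal (-(τ ω * f ω)) ∂μ
        = ∫⁻ ω, ENNReal.ofReal (τ ω) * ENNReal.ofReal (-f ω) ∂μ := by
          congr 1 with ω
          rw [← ENNReal.ofReal_mul (hτ0 ω)]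
          ring_nf
      _ = ∫⁻ ω, ENNReal.ofReal ((μ[τ|m]) ω) * ENNReal.ofReal (-f ω) ∂μ :=
          lkey hm hτm (Filter.Eventually.of_forall hτ0) hτi
            (Measurable.ennreal_ofReal hfm.neg)
      _ = _ := by
          refine lintegral_congr_ae ?_
          filter_upwards [hρ0] with ω h0
          rw [← ENNReal.ofReal_mul h0]
          ring_nf
  -- integrability
  have hint : Integrable (fun ω => τ ω * f ω) μ := by
    refine ⟨(hτm.mul hfF).aestronglyMeasurable, ?_⟩
    rw [hasFiniteIntegral_iff_norm]
    have e1 : ∀ ω, ENNReal.ofReal ‖τ ω * f ω‖ = ENNReal.ofReal (τ ω * |f ω|) := by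
      intro ω
      rw [Real.norm_eq_abs, abs_mul, abs_of_nonneg (hτ0 ω)]
    simp_rw [e1, habs]
    have e2 : ∀ᵐ ω ∂μ, ENNReal.ofReal ((μ[τ|m]) ω * |f ω|)
        = ENNReal.ofReal ‖(μ[τ|m]) ω * f ω‖ := by
      filter_upwards [hρ0] with ω h0
      rw [Real.norm_eq_abs, abs_mul, abs_of_nonneg h0]
    rw [lintegral_congr_ae e2, ← hasFiniteIntegral_iff_norm]
    exact hρf.hasFiniteIntegral
  refine ⟨hint, ?_⟩
  rw [integral_eq_lintegral_pos_part_sub_lintegral_neg_part hint,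
    integral_eq_lintegral_pos_part_sub_lintegral_neg_part hρf,
    hpos, hneg]

end Stmt9Aux

/-- orthogonality of `Λ⊥` and `Λ₀`.  With `T ∈ {0,1}`,
`π = E[T | σ(Y₀,X)]` with `0 < π < 1` a.s., `w = E[T | σ(X)]` with `0 < w < 1` a.s.,
`c` square-integrable `σ(Y₀,X)`-measurable with `E[c | X, T=0] = 0`
(i.e. `E[(1−T)·c | σ(X)] = 0`), and `g` square-integrable `σ(X)`-measurable, the
element `(1−T)·c + ((T−w)/w)·E[c|X]` is orthogonal in `L²` to `((T−π)/(1−π))·g`. -/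
theorem stmt_9 {Ω : Type*} (mX mY0X : MeasurableSpace Ω) {F : MeasurableSpace Ω} (μ : Measure Ω) [IsProbabilityMeasure μ]
    (hXY : mX ≤ mY0X) (hYF : mY0X ≤ F)
    (T : Ω → ℝ) (hTmeas : Measurable T) (hT : ∀ ω, T ω = 0 ∨ T ω = 1)
    (π : Ω → ℝ) (hπ : π =ᵐ[μ] μ[T | mY0X]) (hπ01 : ∀ᵐ ω ∂μ, 0 < π ω ∧ π ω < 1)
    (w : Ω → ℝ) (hw : w =ᵐ[μ] μ[T | mX]) (hw01 : ∀ᵐ ω ∂μ, 0 < w ω ∧ w ω < 1)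
    (c : Ω → ℝ) (hcm : Measurable[mY0X] c) (hc2 : MemLp c 2 μ)
    (hc0 : μ[fun ω => (1 - T ω) * c ω | mX] =ᵐ[μ] 0)
    (g : Ω → ℝ) (hgm : Measurable[mX] g) (hg2 : MemLp g 2 μ) :
    ∫ ω, ((1 - T ω) * c ω + ((T ω - w ω) / w ω) * ((μ[c | mX]) ω)) *
        (((T ω - π ω) / (1 - π ω)) * g ω) ∂μ = 0 := by
  classical
  have hmF : mX ≤ F := hXY.trans hYF
  set w' : Ω → ℝ := μ[T | mX] with hw'def
  set π' : Ω → ℝ := μ[T | mY0X] with hπ'def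
  set h : Ω → ℝ := μ[c | mX] with hhdef
  -- measurability
  have hw'm : Measurable[mX] w' := stronglyMeasurable_condExp.measurable
  have hπ'm : Measurable[mY0X] π' := stronglyMeasurable_condExp.measurable
  have hhm : Measurable[mX] h := stronglyMeasurable_condExp.measurable
  -- a.e. bounds
  have hw'01 : ∀ᵐ ω ∂μ, 0 < w' ω ∧ w' ω < 1 := by
    filter_upwards [hw01, hw] with ω h1 h2 using h2 ▸ h1
  have hπ'01 : ∀ᵐ ω ∂μ, 0 < π' ω ∧ π' ω < 1 := by
    filter_upwards [hπ01, hπ] with ω h1 h2 using h2 ▸ h1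
  -- basic pointwise facts about T
  have hTF : Measurable[F] T := hTmeas
  have hT0 : ∀ ω, 0 ≤ T ω := fun ω => by rcases hT ω with h | h <;> simp [h]
  have hT1 : ∀ ω, T ω ≤ 1 := fun ω => by rcases hT ω with h | h <;> simp [h]
  -- integrability of basic functions
  have hTi : Integrable T μ := by
    refine (integrable_const (μ := μ) (1 : ℝ)).mono' hTF.aestronglyMeasurable
      (Filter.Eventually.of_forall fun ω => ?_)
    rw [Real.norm_eq_abs, abs_of_nonneg (hT0 ω)]; exact hT1 ω
  have hci : Integrable c μ := hc2.integrable one_le_two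
  have hgc : Integrable (fun ω => g ω * c ω) μ := Stmt9Aux.mulInt hg2 hc2
  -- pull-out: μ[g·c | mX] = g·h  ⇒ g·h integrable
  have hpull : μ[g * c | mX] =ᵐ[μ] g * h :=
    condExp_mul_of_stronglyMeasurable_left hgm.stronglyMeasurable hgc hci
  have hgh : Integrable (fun ω => g ω * h ω) μ :=
    (integrable_condExp.congr hpull : Integrable (g * h) μ)
  have hhg : Integrable (fun ω => h ω * g ω) μ :=
    hgh.congr (Filter.Eventually.of_forall fun ω => by simp only [Pi.sub_apply]; ring)
  have hcg : Integrable (fun ω => c ω * g ω) μ :=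
    hgc.congr (Filter.Eventually.of_forall fun ω => by simp only [Pi.sub_apply]; ring)
  have hhcg : Integrable (fun ω => (h ω - c ω) * g ω) μ := by
    refine (hhg.sub hcg).congr (Filter.Eventually.of_forall fun ω => by simp only [Pi.sub_apply]; ring)
  -- the two reduced integrands
  set F₁ : Ω → ℝ := fun ω => ((1 - w' ω) / w' ω) * (h ω * g ω) with hF₁def
  set F₀ : Ω → ℝ := fun ω => (h ω - c ω) * (π' ω / (1 - π' ω)) * g ω with hF₀def
  have hF₁m : Measurable[mX] F₁ :=
    ((measurable_const.sub hw'm).div hw'm).mul (hhm.mul hgm)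
  have hF₀m : Measurable[mY0X] F₀ :=
    (((hhm.mono hXY le_rfl).sub hcm).mul
      (hπ'm.div (measurable_const.sub hπ'm))).mul (hgm.mono hXY le_rfl)
  -- integrability of w'·F₁
  have hw'F₁ : Integrable (fun ω => w' ω * F₁ ω) μ := by
    have h1 : Integrable (fun ω => (1 - w' ω) * (h ω * g ω)) μ := by
      refine hhg.bdd_mul (c := 1)
        ((measurable_const.sub (hw'm.mono hmF le_rfl)).aestronglyMeasurable) ?_
      filter_upwards [hw'01] with ω ⟨h0, h1⟩
      rw [Real.norm_eq_abs, abs_of_nonneg (by linarith)]; linarith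
    refine h1.congr ?_
    filter_upwards [hw'01] with ω ⟨h0, _⟩
    simp only [hF₁def]
    field_simp
    try ring
  -- KEY applications
  obtain ⟨K1i, K1e⟩ := Stmt9Aux.key hmF hTF hT0 hTi hF₁m hw'F₁
  -- τ = 1 - T for m = mY0X
  have h1Tm : Measurable[F] (fun ω => 1 - T ω) := measurable_const.sub hTF
  have h1T0 : ∀ ω, 0 ≤ 1 - T ω := fun ω => by linarith [hT1 ω]
  have h1Ti : Integrable (fun ω => 1 - T ω) μ := (integrable_const (μ := μ) (1 : ℝ)).sub hTi
  have hcond1T : μ[fun ω => 1 - T ω | mY0X] =ᵐ[μ] fun ω => 1 - π' ω := by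
    have h1 : μ[(fun _ => (1 : ℝ)) - T | mY0X] =ᵐ[μ] μ[fun _ => (1 : ℝ) | mY0X] - μ[T | mY0X] :=
      condExp_sub (integrable_const 1) hTi _
    have h2 : μ[fun _ => (1 : ℝ) | mY0X] = fun _ => (1 : ℝ) := condExp_const hYF 1
    refine h1.trans ?_
    rw [h2]
    exact Filter.Eventually.of_forall fun ω => rfl
  have hρ0F₀ : Integrable (fun ω => (μ[fun ω => 1 - T ω | mY0X]) ω * F₀ ω) μ := by
    have h1 : Integrable (fun ω => π' ω * ((h ω - c ω) * g ω)) μ := by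
      refine hhcg.bdd_mul (c := 1) ((hπ'm.mono hYF le_rfl).aestronglyMeasurable) ?_
      filter_upwards [hπ'01] with ω ⟨h0, h1⟩
      rw [Real.norm_eq_abs, abs_of_nonneg h0.le]; linarith
    refine h1.congr ?_
    filter_upwards [hπ'01, hcond1T] with ω ⟨h0, h1⟩ h2
    rw [h2]
    have hne : (1 : ℝ) - π' ω ≠ 0 := by linarith
    simp only [hF₀def]
    field_simp
    try ring
  obtain ⟨K0i, K0e⟩ := Stmt9Aux.key hYF h1Tm h1T0 h1Ti hF₀m hρ0F₀
  -- K2 : ∫ T (h g) = ∫ π' (h g);  K3 : ∫ T (h g) = ∫ w' (h g)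
  have hπ'hg : Integrable (fun ω => π' ω * (h ω * g ω)) μ := by
    refine hhg.bdd_mul (c := 1) ((hπ'm.mono hYF le_rfl).aestronglyMeasurable) ?_
    filter_upwards [hπ'01] with ω ⟨h0, h1⟩
    rw [Real.norm_eq_abs, abs_of_nonneg h0.le]; linarith
  have hw'hg : Integrable (fun ω => w' ω * (h ω * g ω)) μ := by
    refine hhg.bdd_mul (c := 1) ((hw'm.mono hmF le_rfl).aestronglyMeasurable) ?_
    filter_upwards [hw'01] with ω ⟨h0, h1⟩
    rw [Real.norm_eq_abs, abs_of_nonneg h0.le]; linarith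
  have hπ'cg : Integrable (fun ω => π' ω * (c ω * g ω)) μ := by
    refine hcg.bdd_mul (c := 1) ((hπ'm.mono hYF le_rfl).aestronglyMeasurable) ?_
    filter_upwards [hπ'01] with ω ⟨h0, h1⟩
    rw [Real.norm_eq_abs, abs_of_nonneg h0.le]; linarith
  have hhgmY : Measurable[mY0X] (fun ω => h ω * g ω) :=
    (hhm.mono hXY le_rfl).mul (hgm.mono hXY le_rfl)
  obtain ⟨K2i, K2e⟩ := Stmt9Aux.key hYF hTF hT0 hTi hhgmY hπ'hg
  obtain ⟨K3i, K3e⟩ := Stmt9Aux.key (f := fun ω => h ω * g ω) hmF hTF hT0 hTi (hhm.mul hgm) hw'hg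
  obtain ⟨K4i, K4e⟩ :=
    Stmt9Aux.key (f := fun ω => c ω * g ω) hYF hTF hT0 hTi (hcm.mul (hgm.mono hXY le_rfl)) hπ'cg
  -- ∫ (1-T)·c·g = 0 from hc0
  have hZ : ∫ ω, (1 - T ω) * (c ω * g ω) ∂μ = 0 := by
    have hd : Integrable (fun ω => (1 - T ω) * c ω) μ := by
      refine hci.bdd_mul (c := 1) h1Tm.aestronglyMeasurable
        (Filter.Eventually.of_forall fun ω => ?_)
      rw [Real.norm_eq_abs, abs_of_nonneg (h1T0 ω)]; linarith [hT0 ω]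
    have hgd : Integrable (g * fun ω => (1 - T ω) * c ω) μ := by
      have h1 : Integrable (fun ω => (1 - T ω) * (g ω * c ω)) μ := by
        refine hgc.bdd_mul (c := 1) h1Tm.aestronglyMeasurable
          (Filter.Eventually.of_forall fun ω => ?_)
        rw [Real.norm_eq_abs, abs_of_nonneg (h1T0 ω)]; linarith [hT0 ω]
      exact h1.congr (Filter.Eventually.of_forall fun ω => by simp [Pi.mul_apply]; ring)
    have hpull0 : μ[g * fun ω => (1 - T ω) * c ω | mX]
        =ᵐ[μ] g * μ[fun ω => (1 - T ω) * c ω | mX] :=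
      condExp_mul_of_stronglyMeasurable_left hgm.stronglyMeasurable hgd hd
    have hz2 : μ[g * fun ω => (1 - T ω) * c ω | mX] =ᵐ[μ] 0 := by
      refine hpull0.trans ?_
      filter_upwards [hc0] with ω h1
      simp [Pi.mul_apply, h1]
    have : ∫ ω, (g * fun ω => (1 - T ω) * c ω) ω ∂μ = 0 := by
      rw [← integral_condExp (f := g * fun ω => (1 - T ω) * c ω) hmF, integral_congr_ae hz2]
      simp
    rw [← this]
    exact integral_congr_ae (Filter.Eventually.of_forall fun ω => by
      simp [Pi.mul_apply]; ring)
  -- ∫ c g = ∫ h g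
  have hEcg : ∫ ω, c ω * g ω ∂μ = ∫ ω, h ω * g ω ∂μ := by
    have h1 : ∫ ω, (g * c) ω ∂μ = ∫ ω, (g * h) ω ∂μ := by
      rw [← integral_condExp (f := g * c) hmF]
      exact integral_congr_ae hpull
    calc ∫ ω, c ω * g ω ∂μ = ∫ ω, (g * c) ω ∂μ :=
          integral_congr_ae (Filter.Eventually.of_forall fun ω => by
            simp [Pi.mul_apply]; ring)
      _ = ∫ ω, (g * h) ω ∂μ := h1
      _ = ∫ ω, h ω * g ω ∂μ :=
          integral_congr_ae (Filter.Eventually.of_forall fun ω => by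
            simp [Pi.mul_apply]; ring)
  -- ∫ T (c g) = ∫ c g
  have hTcg : ∫ ω, T ω * (c ω * g ω) ∂μ = ∫ ω, c ω * g ω ∂μ := by
    have h1T : Integrable (fun ω => (1 - T ω) * (c ω * g ω)) μ := by
      refine hcg.bdd_mul (c := 1) h1Tm.aestronglyMeasurable
        (Filter.Eventually.of_forall fun ω => ?_)
      rw [Real.norm_eq_abs, abs_of_nonneg (h1T0 ω)]; linarith [hT0 ω]
    have hsplit : ∫ ω, c ω * g ω ∂μ
        = ∫ ω, T ω * (c ω * g ω) ∂μ + ∫ ω, (1 - T ω) * (c ω * g ω) ∂μ := by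
      rw [← integral_add K4i h1T]
      exact integral_congr_ae (Filter.Eventually.of_forall fun ω => by simp only [Pi.sub_apply]; ring)
    rw [hsplit, hZ, add_zero]
  -- main a.e. rewrite of the integrand
  have hmain : (fun ω => ((1 - T ω) * c ω + ((T ω - w ω) / w ω) * (h ω)) *
      (((T ω - π ω) / (1 - π ω)) * g ω))
      =ᵐ[μ] fun ω => T ω * F₁ ω + (1 - T ω) * F₀ ω := by
    filter_upwards [hw, hπ, hw01, hπ01] with ω hwω hπω ⟨hw0, hw1⟩ ⟨hp0, hp1⟩
    simp only [hF₁def, hF₀def]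
    rw [← hwω, ← hπω]
    have hπne : (1 : ℝ) - π ω ≠ 0 := by linarith
    have hwne : w ω ≠ 0 := ne_of_gt hw0
    rcases hT ω with h1 | h1 <;> rw [h1] <;> field_simp <;> ring
  -- put everything together
  rw [integral_congr_ae hmain, integral_add K1i K0i]
  -- left piece
  have hL : ∫ ω, T ω * F₁ ω ∂μ = ∫ ω, h ω * g ω ∂μ - ∫ ω, w' ω * (h ω * g ω) ∂μ := by
    rw [K1e]
    have h1 : ∫ ω, w' ω * F₁ ω ∂μ = ∫ ω, (1 - w' ω) * (h ω * g ω) ∂μ := by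
      refine integral_congr_ae ?_
      filter_upwards [hw'01] with ω ⟨h0, _⟩
      simp only [hF₁def]
      field_simp
      try ring
    rw [h1, ← integral_sub hhg hw'hg]
    exact integral_congr_ae (Filter.Eventually.of_forall fun ω => by simp only [Pi.sub_apply]; ring)
  -- right piece
  have hR : ∫ ω, (1 - T ω) * F₀ ω ∂μ
      = ∫ ω, π' ω * (h ω * g ω) ∂μ - ∫ ω, π' ω * (c ω * g ω) ∂μ := by
    rw [K0e]
    have h1 : ∫ ω, (μ[fun ω => 1 - T ω | mY0X]) ω * F₀ ω ∂μ
        = ∫ ω, π' ω * ((h ω - c ω) * g ω) ∂μ := by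
      refine integral_congr_ae ?_
      filter_upwards [hπ'01, hcond1T] with ω ⟨h0, h1⟩ h2
      rw [h2]
      simp only [hF₀def]
      have hne : (1 : ℝ) - π' ω ≠ 0 := by linarith
      field_simp
      try ring
    rw [h1, ← integral_sub hπ'hg hπ'cg]
    exact integral_congr_ae (Filter.Eventually.of_forall fun ω => by simp only [Pi.sub_apply]; ring)
  rw [hL, hR, ← K2e, K3e, K4e.symm.trans hTcg, hEcg]
  ring
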